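/- Let G and Ḡ be MILP instances of size (m,n) with SB(G) ∈ ℝ^n and SB(Ḡ) ∈ ℝ^n. If G ∼₂^W Ḡ, then SB(G) = SB(Ḡ). -/

import Mathlib

open scoped BigOperators Classical
open MeasureTheory

noncomputable section

/-- Type of constraint senses: `0` is `≤`, `1` is `=`, `2` is `≥`. -/
abbrev Sense : Type := Fin 3

/-- Extended lower bounds: `Sum.inl a` is a real bound, `Sum.inr ()` is `-∞`. -/
abbrev ExtLo : Type := ℝ ⊕ Unit

/-- Extended upper bounds: `Sum.inl a` is a real bound, `Sum.inr ()` is `+∞`. -/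
abbrev ExtHi : Type := ℝ ⊕ Unit

def senseRel (s : Sense) (a b : ℝ) : Prop :=
  if s = 0 then a ≤ b else if s = 1 then a = b else b ≤ a

def loSat (lo : ExtLo) (x : ℝ) : Prop :=
  match lo with
  | Sum.inl a => a ≤ x
  | Sum.inr _ => True

def hiSat (hi : ExtHi) (x : ℝ) : Prop :=
  match hi with
  | Sum.inl a => x ≤ a
  | Sum.inr _ => True

/-- The space `𝒢_{m,n}` of MILP instances of size `(m,n)`:
`(A, b, c, ∘, l, u, I)`, with `I` encoded as a Boolean indicator vector. -/
abbrev MILP (m n : ℕ) : Type :=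
  (Fin m → Fin n → ℝ) × (Fin m → ℝ) × (Fin n → ℝ) × (Fin m → Sense) ×
  (Fin n → ExtLo) × (Fin n → ExtHi) × (Fin n → Bool)

namespace MILP

variable {m n : ℕ}

def A (G : MILP m n) : Fin m → Fin n → ℝ := G.1
def b (G : MILP m n) : Fin m → ℝ := G.2.1
def c (G : MILP m n) : Fin n → ℝ := G.2.2.1
def sense (G : MILP m n) : Fin m → Sense := G.2.2.2.1
def lo (G : MILP m n) : Fin n → ExtLo := G.2.2.2.2.1
def hi (G : MILP m n) : Fin n → ExtHi := G.2.2.2.2.2.1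
def isInt (G : MILP m n) : Fin n → Bool := G.2.2.2.2.2.2

end MILP

/-- Satisfaction of the linear constraints `(Ax) ∘ b`. -/
def consSat {m n : ℕ} (G : MILP m n) (x : Fin n → ℝ) : Prop :=
  ∀ i, senseRel (MILP.sense G i) (∑ j, MILP.A G i j * x j) (MILP.b G i)

/-- Feasible set of the LP relaxation of `G`. -/
def lpFeasSet {m n : ℕ} (G : MILP m n) : Set (Fin n → ℝ) :=
  {x | consSat G x ∧ ∀ j, loSat (MILP.lo G j) (x j) ∧ hiSat (MILP.hi G j) (x j)}

/-- Feasible set of `LP(G, j, lo', hi')`: the LP relaxation of `G` with the bound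
constraint on variable `j` replaced by `lo' ≤ x_j ≤ hi'`. -/
def feasSetMod {m n : ℕ} (G : MILP m n) (j : Fin n) (lo' : ExtLo) (hi' : ExtHi) :
    Set (Fin n → ℝ) :=
  {x | consSat G x ∧ (∀ j', j' ≠ j → loSat (MILP.lo G j') (x j') ∧ hiSat (MILP.hi G j') (x j'))
      ∧ loSat lo' (x j) ∧ hiSat hi' (x j)}

/-- Optimal value (in `ℝ ∪ {±∞}`) of the LP `min cᵀx` over `S`:
`+∞` if infeasible, `-∞` if unbounded below. -/
def lpVal {n : ℕ} (c : Fin n → ℝ) (S : Set (Fin n → ℝ)) : EReal :=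
  ⨅ x ∈ S, ((∑ j, c j * x j : ℝ) : EReal)

/-- `f*(G)`: optimal value of the LP relaxation of `G`. -/
def fstar {m n : ℕ} (G : MILP m n) : EReal := lpVal (MILP.c G) (lpFeasSet G)

/-- `f*(G, j, lo', hi')`: optimal value of `LP(G, j, lo', hi')`. -/
def lpValMod {m n : ℕ} (G : MILP m n) (j : Fin n) (lo' : ExtLo) (hi' : ExtHi) : EReal :=
  lpVal (MILP.c G) (feasSetMod G j lo' hi')

/-- The Euclidean norm on `ℝⁿ` (as `Fin n → ℝ`). -/
def euclNorm {n : ℕ} (x : Fin n → ℝ) : ℝ := Real.sqrt (∑ j, x j ^ 2)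

/-- The Euclidean distance on `ℝⁿ`. -/
def euclDist {n : ℕ} (x y : Fin n → ℝ) : ℝ := euclNorm (fun j => x j - y j)

/-- `x` is an optimal solution of the LP relaxation of `G`. -/
def IsOptSol {m n : ℕ} (G : MILP m n) (x : Fin n → ℝ) : Prop :=
  x ∈ lpFeasSet G ∧ ((∑ j, MILP.c G j * x j : ℝ) : EReal) = fstar G

/-- `x` is an optimal solution of smallest Euclidean norm of the LP relaxation of `G`. -/
def IsMinNormOpt {m n : ℕ} (G : MILP m n) (x : Fin n → ℝ) : Prop :=
  IsOptSol G x ∧ ∀ y, IsOptSol G y → euclNorm x ≤ euclNorm y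

/-- `x*(G)`: the optimal solution of smallest Euclidean norm of the LP relaxation
(defaults to `0` when it does not exist). -/
def xstar {m n : ℕ} (G : MILP m n) : Fin n → ℝ :=
  if h : ∃ x, IsMinNormOpt G x then h.choose else 0

/-- `f*(G, j, l_j, ⌊x*(G)_j⌋)`. -/
def branchDown {m n : ℕ} (G : MILP m n) (j : Fin n) : EReal :=
  lpValMod G j (MILP.lo G j) (Sum.inl ((⌊xstar G j⌋ : ℤ) : ℝ))

/-- `f*(G, j, ⌈x*(G)_j⌉, u_j)`. -/
def branchUp {m n : ℕ} (G : MILP m n) (j : Fin n) : EReal :=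
  lpValMod G j (Sum.inl ((⌈xstar G j⌉ : ℤ) : ℝ)) (MILP.hi G j)

/-- The strong branching score vector `SB(G) ∈ ℝⁿ`. -/
def SB {m n : ℕ} (G : MILP m n) : Fin n → ℝ := fun j =>
  if MILP.isInt G j then
    ((branchDown G j).toReal - (fstar G).toReal) * ((branchUp G j).toReal - (fstar G).toReal)
  else 0

/-- `SB(G) ∈ ℝⁿ`: the LP relaxation of `G` is feasible and bounded (so that the
min-norm optimal solution `x*(G)` exists and `f*(G)` is finite), and all the
branch LP values entering the strong branching scores are finite. -/
def SBRealValued {m n : ℕ} (G : MILP m n) : Prop :=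
  (∃ x, IsMinNormOpt G x) ∧ fstar G ≠ ⊤ ∧ fstar G ≠ ⊥ ∧
  ∀ j, MILP.isInt G j →
    branchDown G j ≠ ⊤ ∧ branchDown G j ≠ ⊥ ∧ branchUp G j ≠ ⊤ ∧ branchUp G j ≠ ⊥

/-! ### WL colors -/

abbrev VFeat : Type := ℝ × Sense
abbrev WFeat : Type := ℝ × ExtLo × ExtHi × Bool

/-- The pair (type of constraint-node colors, type of variable-node colors) at
each round of the WL test. -/
def WLTypes : ℕ → Type × Type
  | 0 => (VFeat, WFeat)
  | l + 1 =>
      ((WLTypes l).1 × Multiset ((WLTypes l).2 × ℝ),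
       (WLTypes l).2 × Multiset ((WLTypes l).1 × ℝ))

abbrev VColor (l : ℕ) : Type := (WLTypes l).1
abbrev WColor (l : ℕ) : Type := (WLTypes l).2

/-- The canonical WL colors of a MILP instance: `(wl G l).1 i = C_l^V(i)` and
`(wl G l).2 j = C_l^W(j)`. -/
def wl {m n : ℕ} (G : MILP m n) : (l : ℕ) → (Fin m → VColor l) × (Fin n → WColor l)
  | 0 =>
      (fun i => (MILP.b G i, MILP.sense G i),
       fun j => (MILP.c G j, MILP.lo G j, MILP.hi G j, MILP.isInt G j))
  | l + 1 =>
      (fun i => ((wl G l).1 i,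
        (Finset.univ.filter (fun j => MILP.A G i j ≠ 0)).val.map
          (fun j => ((wl G l).2 j, MILP.A G i j))),
       fun j => ((wl G l).2 j,
        (Finset.univ.filter (fun i => MILP.A G i j ≠ 0)).val.map
          (fun i => ((wl G l).1 i, MILP.A G i j))))

/-- `G` is message-passing-tractable: whenever two constraints and two variables are
respectively indistinguishable by all rounds of the WL test, the corresponding matrix
entries agree (i.e. every submatrix of `A` over a pair of classes of the stable WL
partition is constant). -/
def MPTractable {m n : ℕ} (G : MILP m n) : Prop :=
  ∀ i i' j j', (∀ l, (wl G l).1 i = (wl G l).1 i') → (∀ l, (wl G l).2 j = (wl G l).2 j') →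
    MILP.A G i j = MILP.A G i' j'

/-- `G ∼^W G2`. -/
def WLEquivW {m n : ℕ} (G G2 : MILP m n) : Prop :=
  ∀ l, Finset.univ.val.map ((wl G l).1) = Finset.univ.val.map ((wl G2 l).1)
    ∧ ∀ j, (wl G l).2 j = (wl G2 l).2 j

/-! ### MP-GNNs -/

/-- A message-passing GNN of size `(m,n)`. -/
structure MPGNN (m n : ℕ) where
  L : ℕ
  d : ℕ → ℕ
  e : ℕ → ℕ
  p0 : ℝ × Sense → (Fin (d 0) → ℝ)
  q0 : ℝ × ExtLo × ExtHi × Bool → (Fin (d 0) → ℝ)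
  f : (l : ℕ) → (Fin (d l) → ℝ) × ℝ → (Fin (e l) → ℝ)
  g : (l : ℕ) → (Fin (d l) → ℝ) × ℝ → (Fin (e l) → ℝ)
  p : (l : ℕ) → (Fin (d l) → ℝ) × (Fin (e l) → ℝ) → (Fin (d (l + 1)) → ℝ)
  q : (l : ℕ) → (Fin (d l) → ℝ) × (Fin (e l) → ℝ) → (Fin (d (l + 1)) → ℝ)
  r : (Fin (d L) → ℝ) × (Fin (d L) → ℝ) × (Fin (d L) → ℝ) → ℝ
  p0_cont : Continuous p0
  q0_cont : Continuous q0
  f_cont : ∀ l, Continuous (f l)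
  g_cont : ∀ l, Continuous (g l)
  p_cont : ∀ l, Continuous (p l)
  q_cont : ∀ l, Continuous (q l)
  r_cont : Continuous r
  f_zero : ∀ l t, f l (t, 0) = 0
  g_zero : ∀ l s, g l (s, 0) = 0

namespace MPGNN

variable {m n : ℕ}

/-- The features of an MP-GNN on input `G` after `l` layers:
`(st N G l).1 i = s_i^l` and `(st N G l).2 j = t_j^l`. -/
def st (N : MPGNN m n) (G : MILP m n) :
    (l : ℕ) → (Fin m → (Fin (N.d l) → ℝ)) × (Fin n → (Fin (N.d l) → ℝ))
  | 0 =>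
      (fun i => N.p0 (MILP.b G i, MILP.sense G i),
       fun j => N.q0 (MILP.c G j, MILP.lo G j, MILP.hi G j, MILP.isInt G j))
  | l + 1 =>
      (fun i => N.p l ((st N G l).1 i, ∑ j, N.f l ((st N G l).2 j, MILP.A G i j)),
       fun j => N.q l ((st N G l).2 j, ∑ i, N.g l ((st N G l).1 i, MILP.A G i j)))

/-- The output `F(G) ∈ ℝⁿ` of an MP-GNN. -/
def eval (N : MPGNN m n) (G : MILP m n) : Fin n → ℝ := fun j =>
  N.r (∑ i, (st N G N.L).1 i, ∑ j', (st N G N.L).2 j', (st N G N.L).2 j)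

end MPGNN

/-! ### 2-FWL colors -/

/-- The pair (type of `(V,W)`-pair colors, type of `(W,W)`-pair colors) at each
round of the 2-FWL test. -/
def FWLTypes : ℕ → Type × Type
  | 0 => (VFeat × WFeat × ℝ, WFeat × WFeat × Bool)
  | l + 1 =>
      ((FWLTypes l).1 × Multiset ((FWLTypes l).2 × (FWLTypes l).1),
       (FWLTypes l).2 × Multiset ((FWLTypes l).1 × (FWLTypes l).1))

abbrev VWColor (l : ℕ) : Type := (FWLTypes l).1
abbrev WWColor (l : ℕ) : Type := (FWLTypes l).2

/-- The canonical 2-FWL colors of a MILP instance: `(fwl G l).1 i j = C_l^{VW}(i,j)` and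
`(fwl G l).2 j₁ j₂ = C_l^{WW}(j₁,j₂)`. -/
def fwl {m n : ℕ} (G : MILP m n) :
    (l : ℕ) → (Fin m → Fin n → VWColor l) × (Fin n → Fin n → WWColor l)
  | 0 =>
      (fun i j => ((MILP.b G i, MILP.sense G i),
        (MILP.c G j, MILP.lo G j, MILP.hi G j, MILP.isInt G j), MILP.A G i j),
       fun j1 j2 => ((MILP.c G j1, MILP.lo G j1, MILP.hi G j1, MILP.isInt G j1),
        (MILP.c G j2, MILP.lo G j2, MILP.hi G j2, MILP.isInt G j2), decide (j1 = j2)))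
  | l + 1 =>
      (fun i j => ((fwl G l).1 i j,
        Finset.univ.val.map (fun j1 => ((fwl G l).2 j1 j, (fwl G l).1 i j1))),
       fun j1 j2 => ((fwl G l).2 j1 j2,
        Finset.univ.val.map (fun i => ((fwl G l).1 i j2, (fwl G l).1 i j1))))

/-- `G ∼₂ G2`. -/
def FWLEquiv {m n : ℕ} (G G2 : MILP m n) : Prop :=
  ∀ l, (Finset.univ : Finset (Fin m × Fin n)).val.map (fun p => (fwl G l).1 p.1 p.2)
        = (Finset.univ : Finset (Fin m × Fin n)).val.map (fun p => (fwl G2 l).1 p.1 p.2)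
    ∧ (Finset.univ : Finset (Fin n × Fin n)).val.map (fun p => (fwl G l).2 p.1 p.2)
        = (Finset.univ : Finset (Fin n × Fin n)).val.map (fun p => (fwl G2 l).2 p.1 p.2)

/-- `G ∼₂^W G2`. -/
def FWLEquivW {m n : ℕ} (G G2 : MILP m n) : Prop :=
  ∀ l, ∀ j, Finset.univ.val.map (fun i => (fwl G l).1 i j)
        = Finset.univ.val.map (fun i => (fwl G2 l).1 i j)
    ∧ Finset.univ.val.map (fun j1 => (fwl G l).2 j1 j)
        = Finset.univ.val.map (fun j1 => (fwl G2 l).2 j1 j)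

/-! ### 2-FGNNs -/

/-- A second-order folklore GNN of size `(m,n)`. -/
structure FGNN2 (m n : ℕ) where
  L : ℕ
  d : ℕ → ℕ
  e : ℕ → ℕ
  p0 : VFeat × WFeat × ℝ → (Fin (d 0) → ℝ)
  q0 : WFeat × WFeat × Bool → (Fin (d 0) → ℝ)
  f : (l : ℕ) → (Fin (d l) → ℝ) × (Fin (d l) → ℝ) → (Fin (e l) → ℝ)
  g : (l : ℕ) → (Fin (d l) → ℝ) × (Fin (d l) → ℝ) → (Fin (e l) → ℝ)
  p : (l : ℕ) → (Fin (d l) → ℝ) × (Fin (e l) → ℝ) → (Fin (d (l + 1)) → ℝ)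
  q : (l : ℕ) → (Fin (d l) → ℝ) × (Fin (e l) → ℝ) → (Fin (d (l + 1)) → ℝ)
  r : (Fin (d L) → ℝ) × (Fin (d L) → ℝ) → ℝ
  p0_cont : Continuous p0
  q0_cont : Continuous q0
  f_cont : ∀ l, Continuous (f l)
  g_cont : ∀ l, Continuous (g l)
  p_cont : ∀ l, Continuous (p l)
  q_cont : ∀ l, Continuous (q l)
  r_cont : Continuous r

namespace FGNN2

variable {m n : ℕ}

/-- The features of a 2-FGNN on input `G` after `l` layers:
`(st N G l).1 i j = s_{ij}^l` and `(st N G l).2 j₁ j₂ = t_{j₁j₂}^l`. -/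
def st (N : FGNN2 m n) (G : MILP m n) :
    (l : ℕ) → (Fin m → Fin n → (Fin (N.d l) → ℝ)) × (Fin n → Fin n → (Fin (N.d l) → ℝ))
  | 0 =>
      (fun i j => N.p0 ((MILP.b G i, MILP.sense G i),
        (MILP.c G j, MILP.lo G j, MILP.hi G j, MILP.isInt G j), MILP.A G i j),
       fun j1 j2 => N.q0 ((MILP.c G j1, MILP.lo G j1, MILP.hi G j1, MILP.isInt G j1),
        (MILP.c G j2, MILP.lo G j2, MILP.hi G j2, MILP.isInt G j2), decide (j1 = j2)))
  | l + 1 =>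
      (fun i j => N.p l ((st N G l).1 i j, ∑ j1, N.f l ((st N G l).2 j1 j, (st N G l).1 i j1)),
       fun j1 j2 => N.q l ((st N G l).2 j1 j2, ∑ i, N.g l ((st N G l).1 i j2, (st N G l).1 i j1)))

/-- The output `F(G) ∈ ℝⁿ` of a 2-FGNN. -/
def eval (N : FGNN2 m n) (G : MILP m n) : Fin n → ℝ := fun j =>
  N.r (∑ i, (st N G N.L).1 i j, ∑ j1, (st N G N.L).2 j1 j)

end FGNN2


/-!
Fix a variable `j`. Over all rounds, the colors `C^{VW}(·, j)` and `C^{WW}(·, j)` partition the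
constraints and the variables of an instance into classes, and each round refines the previous one
through multisets that can be matched by permutations. Hence every block of `A` between a row class
and a column class has constant row sums and constant column sums (an equitable partition), and
`G ∼₂^W Ḡ` matches the classes of `G` and `Ḡ` bijectively, with `{j}` a class of its own because
of `δ_{kj}`. Averaging a feasible point of `LP(G, j, l̂, û)` over the column classes and moving it
along the matching therefore gives a feasible point of `LP(Ḡ, j, l̂, û)` with the same objective
value, the same `j`-th coordinate and no larger Euclidean norm. So the two LPs have the same
optimal value, and since the minimum-norm optimum is unique, `x*(G)_j = x*(Ḡ)_j`: every quantity
entering `SB_j` agrees.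
-/

open Finset

theorem exists_perm_of_map_univ_eq {α β : Type*} [Fintype α] {f g : α → β}
    (h : univ.val.map f = univ.val.map g) : ∃ σ : Equiv.Perm α, ∀ a, f (σ a) = g a := by
  have hcard : ∀ b, Fintype.card {a // g a = b} = Fintype.card {a // f a = b} := by
    intro b
    have hb := congrArg (Multiset.count b) h
    simp only [Multiset.count_map, Fintype.card_subtype, Finset.card, Finset.filter_val] at hb ⊢
    simpa [eq_comm] using hb.symm
  let e b : {a // g a = b} ≃ {a // f a = b} := Fintype.equivOfCardEq (hcard b)
  refine ⟨(Equiv.sigmaFiberEquiv g).symm.trans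
    ((Equiv.sigmaCongrRight e).trans (Equiv.sigmaFiberEquiv f)), fun a => (e (g a) ⟨a, rfl⟩).2⟩

/-- The sets of permutations matching `f l` with `g l` decrease in `l`, and a decreasing chain of
subsets of the finite type `Equiv.Perm α` stabilizes. -/
theorem exists_perm_forall_of_map_univ_eq {α : Type*} [Fintype α] {β : ℕ → Type*}
    (f g : (l : ℕ) → α → β l) (proj : (l : ℕ) → β (l + 1) → β l)
    (hf : ∀ l a, proj l (f (l + 1) a) = f l a) (hg : ∀ l a, proj l (g (l + 1) a) = g l a)
    (h : ∀ l, univ.val.map (f l) = univ.val.map (g l)) :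
    ∃ σ : Equiv.Perm α, ∀ l a, f l (σ a) = g l a := by
  let S l : Set (Equiv.Perm α) := {σ | ∀ a, f l (σ a) = g l a}
  have hS : Antitone S := antitone_nat_of_succ_le fun l σ hσ a => by
    rw [← hf, ← hg, (hσ a :)]
  obtain ⟨N, hN⟩ := WellFoundedLT.antitone_chain_condition hS
  obtain ⟨σ, hσ⟩ := exists_perm_of_map_univ_eq (h N)
  refine ⟨σ, fun l => ?_⟩
  rcases le_total l N with hl | hl
  · exact hS hl hσ
  · exact (hN l hl ▸ hσ : σ ∈ S l)

theorem Convex.sum_div_card_mem {ι : Type*} {s : Set ℝ} (hs : Convex ℝ s) {t : Finset ι}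
    (ht : t.Nonempty) {z : ι → ℝ} (hz : ∀ i ∈ t, z i ∈ s) : (∑ i ∈ t, z i) / #t ∈ s := by
  have := hs.centerMass_mem (w := fun _ => (1 : ℝ)) (fun _ _ => zero_le_one) (by simpa using ht) hz
  simpa [Finset.centerMass, div_eq_inv_mul] using this

section ClassMean

variable {κ β : Type*} [Fintype κ] [DecidableEq β]

/-- Zero when the class `c⁻¹(b)` is empty. -/
def classMean (c : κ → β) (x : κ → ℝ) (b : β) : ℝ :=
  (∑ k with c k = b, x k) / #{k | c k = b}

theorem sum_mul_classMean (c : κ → β) (w x : κ → ℝ) :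
    ∑ k, w k * classMean c x (c k) =
      ∑ b ∈ univ.image c, (∑ k with c k = b, w k) * classMean c x b := by
  rw [← sum_fiberwise_of_maps_to (fun k _ => mem_image_of_mem c (mem_univ k))]
  refine sum_congr rfl fun b _ => ?_
  rw [sum_mul]
  exact sum_congr rfl fun k hk => by rw [(mem_filter.1 hk).2]

theorem sum_mul_classMean_comm (c : κ → β) (w x : κ → ℝ) :
    ∑ k, w k * classMean c x (c k) = ∑ k, classMean c w (c k) * x k := by
  simp_rw [mul_comm _ (x _), sum_mul_classMean]
  refine sum_congr rfl fun b _ => ?_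
  simp only [classMean]
  ring

theorem classMean_apply_of_const (c : κ → β) {w : κ → ℝ}
    (hw : ∀ k k', c k = c k' → w k = w k') (k : κ) : classMean c w (c k) = w k := by
  have hcard : (#{k' | c k' = c k} : ℝ) ≠ 0 := by
    exact_mod_cast (card_pos.2 ⟨k, by simp⟩).ne'
  rw [classMean, sum_congr rfl fun k' hk' => hw k' k (mem_filter.1 hk').2, sum_const,
    nsmul_eq_mul, mul_div_cancel_left₀ _ hcard]

theorem sum_mul_classMean_of_const (c : κ → β) {w : κ → ℝ}
    (hw : ∀ k k', c k = c k' → w k = w k') (x : κ → ℝ) :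
    ∑ k, w k * classMean c x (c k) = ∑ k, w k * x k := by
  simp_rw [sum_mul_classMean_comm, classMean_apply_of_const c hw]

theorem sum_classMean_sq_le (c : κ → β) (x : κ → ℝ) :
    ∑ k, classMean c x (c k) ^ 2 ≤ ∑ k, x k ^ 2 := by
  set y := fun k => classMean c x (c k)
  have hy : ∑ k, y k ^ 2 = ∑ k, y k * x k := by
    simp_rw [sq]
    exact sum_mul_classMean_of_const c (fun k k' hkk' => by simp only [y, hkk']) x
  have hcs := sum_mul_sq_le_sq_mul_sq univ y x
  have hy0 : 0 ≤ ∑ k, y k ^ 2 := sum_nonneg fun k _ => sq_nonneg _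
  have hx0 : 0 ≤ ∑ k, x k ^ 2 := sum_nonneg fun k _ => sq_nonneg _
  rw [← hy] at hcs
  nlinarith

theorem classMean_mem {s : Set ℝ} (hs : Convex ℝ s) {c : κ → β} {x : κ → ℝ} {b : β}
    (hb : b ∈ Set.range c) (hx : ∀ k, c k = b → x k ∈ s) : classMean c x b ∈ s := by
  obtain ⟨k, rfl⟩ := hb
  exact hs.sum_div_card_mem ⟨k, by simp⟩ fun k' hk' => hx k' (mem_filter.1 hk').2

/-- Double counting the block `I × K` of an equitable partition gives
`|I| · (row sum) = |K| · (column sum)`. -/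
theorem classMean_row_eq_classMean_col {ι α : Type*} [Fintype ι] [DecidableEq α]
    (A : ι → κ → ℝ) (r : ι → α) (c : κ → β)
    (hrow : ∀ i i' b, r i = r i' → ∑ k with c k = b, A i k = ∑ k with c k = b, A i' k)
    (hcol : ∀ k k' a, c k = c k' → ∑ i with r i = a, A i k = ∑ i with r i = a, A i k')
    (i : ι) (k : κ) :
    classMean c (A i) (c k) = classMean r (fun i' => A i' k) (r i) := by
  set I : Finset ι := {i' | r i' = r i}
  set K : Finset κ := {k' | c k' = c k}
  have hI : (0 : ℝ) < #I := by exact_mod_cast card_pos.2 ⟨i, by simp [I]⟩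
  have hK : (0 : ℝ) < #K := by exact_mod_cast card_pos.2 ⟨k, by simp [K]⟩
  have hblock : #I * ∑ k' ∈ K, A i k' = #K * ∑ i' ∈ I, A i' k := by
    calc #I * ∑ k' ∈ K, A i k' = ∑ i' ∈ I, ∑ k' ∈ K, A i' k' := by
          rw [← nsmul_eq_mul, ← sum_const]
          exact sum_congr rfl fun i' hi' => hrow i i' _ (mem_filter.1 hi').2.symm
      _ = ∑ k' ∈ K, ∑ i' ∈ I, A i' k' := sum_comm
      _ = #K * ∑ i' ∈ I, A i' k := by
          rw [← nsmul_eq_mul, ← sum_const]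
          exact sum_congr rfl fun k' hk' => hcol k' k _ (mem_filter.1 hk').2
  rw [classMean, classMean, div_eq_div_iff hK.ne' hI.ne']
  linarith

theorem sum_mul_classMean_of_equitable {ι α : Type*} [Fintype ι] [DecidableEq α]
    (A : ι → κ → ℝ) (r : ι → α) (c : κ → β)
    (hrow : ∀ i i' b, r i = r i' → ∑ k with c k = b, A i k = ∑ k with c k = b, A i' k)
    (hcol : ∀ k k' a, c k = c k' → ∑ i with r i = a, A i k = ∑ i with r i = a, A i k')
    (x : κ → ℝ) (i : ι) :
    ∑ k, A i k * classMean c x (c k) = classMean r (fun i' => ∑ k, A i' k * x k) (r i) := by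
  rw [sum_mul_classMean_comm]
  simp_rw [classMean_row_eq_classMean_col A r c hrow hcol, classMean, div_mul_eq_mul_div, sum_mul,
    ← sum_div]
  rw [sum_comm]

end ClassMean

theorem convex_senseRel (s : Sense) (b : ℝ) : Convex ℝ {a | senseRel s a b} := by
  unfold senseRel
  split_ifs
  exacts [convex_Iic b, convex_singleton b, convex_Ici b]

theorem convex_loSat (lo : ExtLo) : Convex ℝ {a | loSat lo a} := by
  cases lo with
  | inl l => exact convex_Ici l
  | inr _ => exact convex_univ

theorem convex_hiSat (hi : ExtHi) : Convex ℝ {a | hiSat hi a} := by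
  cases hi with
  | inl u => exact convex_Iic u
  | inr _ => exact convex_univ

section LP

variable {m n : ℕ}

theorem convex_lpFeasSet (G : MILP m n) : Convex ℝ (lpFeasSet G) := by
  intro x hx y hy a b ha hb hab
  refine ⟨fun i => ?_, fun k => ?_⟩
  · have hlin : ∑ k, MILP.A G i k * (a • x + b • y) k =
        a • ∑ k, MILP.A G i k * x k + b • ∑ k, MILP.A G i k * y k := by
      simp only [Pi.add_apply, Pi.smul_apply, smul_eq_mul, mul_sum]
      rw [← sum_add_distrib]
      exact sum_congr rfl fun k _ => by ring
    show senseRel _ (∑ k, MILP.A G i k * (a • x + b • y) k) _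
    rw [hlin]
    exact convex_senseRel _ _ (hx.1 i) (hy.1 i) ha hb hab
  · exact ⟨convex_loSat _ (hx.2 k).1 (hy.2 k).1 ha hb hab,
      convex_hiSat _ (hx.2 k).2 (hy.2 k).2 ha hb hab⟩

theorem convex_setOf_isOptSol (G : MILP m n) : Convex ℝ {x | IsOptSol G x} := by
  intro x hx y hy a b ha hb hab
  refine ⟨convex_lpFeasSet G hx.1 hy.1 ha hb hab, ?_⟩
  have hxy : ∑ k, MILP.c G k * x k = ∑ k, MILP.c G k * y k := by
    exact_mod_cast hx.2.trans hy.2.symm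
  have hlin : ∑ k, MILP.c G k * (a • x + b • y) k = ∑ k, MILP.c G k * x k := by
    simp only [Pi.add_apply, Pi.smul_apply, smul_eq_mul, mul_add, sum_add_distrib]
    simp only [mul_left_comm (MILP.c G _), ← mul_sum, ← hxy]
    rw [← add_mul, hab, one_mul]
  rw [hlin]
  exact hx.2

theorem euclNorm_eq_norm {n : ℕ} (x : Fin n → ℝ) :
    euclNorm x = ‖(WithLp.toLp 2 x : EuclideanSpace ℝ (Fin n))‖ := by
  simp [euclNorm, EuclideanSpace.norm_eq]

/-- The optimal set is convex and the Euclidean norm is strictly convex. -/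
theorem IsMinNormOpt.unique {G : MILP m n} {x y : Fin n → ℝ}
    (hx : IsMinNormOpt G x) (hy : IsMinNormOpt G y) : x = y := by
  by_contra hne
  have hmid : IsOptSol G ((1 / 2 : ℝ) • (x + y)) := by
    simpa [smul_add] using convex_setOf_isOptSol G hx.1 hy.1 (by norm_num : (0 : ℝ) ≤ 1 / 2)
      (by norm_num : (0 : ℝ) ≤ 1 / 2) (by norm_num)
  have hnorm : euclNorm x = euclNorm y := le_antisymm (hx.2 y hy.1) (hy.2 x hx.1)
  rw [euclNorm_eq_norm, euclNorm_eq_norm] at hnorm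
  have hlt := (norm_midpoint_lt_iff hnorm).2 ((WithLp.toLp_injective 2).ne hne)
  have hle := hx.2 _ hmid
  rw [euclNorm_eq_norm, euclNorm_eq_norm] at hle
  simp only [← WithLp.toLp_add, ← WithLp.toLp_smul] at hlt
  linarith

theorem xstar_eq {G : MILP m n} {x : Fin n → ℝ} (hx : IsMinNormOpt G x) : xstar G = x := by
  have hex : ∃ x, IsMinNormOpt G x := ⟨x, hx⟩
  rw [xstar, dif_pos hex]
  exact hex.choose_spec.unique hx

end LP

section AnchoredColors

variable {m n : ℕ} {G H : MILP m n} {j : Fin n}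

def rowColor (G : MILP m n) (j : Fin n) (i : Fin m) : (l : ℕ) → VWColor l :=
  fun l => (fwl G l).1 i j

def colColor (G : MILP m n) (j : Fin n) (k : Fin n) : (l : ℕ) → WWColor l :=
  fun l => (fwl G l).2 k j

theorem FWLEquivW.symm (h : FWLEquivW G H) : FWLEquivW H G :=
  fun l j => ⟨(h l j).1.symm, (h l j).2.symm⟩

theorem features_eq_of_colColor_eq {k k' : Fin n} (h : colColor G j k = colColor H j k') :
    MILP.c G k = MILP.c H k' ∧ MILP.lo G k = MILP.lo H k' ∧ MILP.hi G k = MILP.hi H k' ∧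
      MILP.isInt G k = MILP.isInt H k' := by
  have hfeat := congrArg Prod.fst (congrFun h 0)
  simpa only [colColor, fwl, Prod.mk.injEq] using hfeat

theorem eq_anchor_iff_of_colColor_eq {k k' : Fin n} (h : colColor G j k = colColor H j k') :
    k = j ↔ k' = j := by
  have hdiag := congrArg (fun p => p.2.2) (congrFun h 0)
  simpa only [colColor, fwl, decide_eq_decide] using hdiag

theorem features_eq_of_rowColor_eq {i i' : Fin m} (h : rowColor G j i = rowColor H j i') :
    MILP.b G i = MILP.b H i' ∧ MILP.sense G i = MILP.sense H i' := by
  have hfeat := congrArg Prod.fst (congrFun h 0)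
  simpa only [rowColor, fwl, Prod.mk.injEq] using hfeat

theorem A_eq_of_fwl_zero_eq {i i' : Fin m} {k k' : Fin n}
    (h : (fwl G 0).1 i k = (fwl H 0).1 i' k') : MILP.A G i k = MILP.A H i' k' :=
  congrArg (fun p => p.2.2) h

/-- The round-`(l+1)` color of `(i, j)` records the multiset of the pairs
`(C_l^{WW}(k, j), C_l^{VW}(i, k))`. -/
theorem exists_colPerm_of_rowColor_eq {i i' : Fin m} (h : rowColor G j i = rowColor H j i') :
    ∃ σ : Equiv.Perm (Fin n), ∀ k,
      colColor H j (σ k) = colColor G j k ∧ MILP.A H i' (σ k) = MILP.A G i k := by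
  obtain ⟨σ, hσ⟩ := exists_perm_forall_of_map_univ_eq
    (fun l k => ((fwl H l).2 k j, (fwl H l).1 i' k)) (fun l k => ((fwl G l).2 k j, (fwl G l).1 i k))
    (fun _ p => (p.1.1, p.2.1)) (fun _ _ => rfl) (fun _ _ => rfl)
    fun l => (Prod.mk.inj (congrFun h (l + 1))).2.symm
  exact ⟨σ, fun k => ⟨funext fun l => congrArg Prod.fst (hσ l k),
    A_eq_of_fwl_zero_eq (congrArg Prod.snd (hσ 0 k))⟩⟩

theorem exists_rowPerm_of_colColor_eq {k k' : Fin n} (h : colColor G j k = colColor H j k') :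
    ∃ τ : Equiv.Perm (Fin m), ∀ i,
      rowColor H j (τ i) = rowColor G j i ∧ MILP.A H (τ i) k' = MILP.A G i k := by
  obtain ⟨τ, hτ⟩ := exists_perm_forall_of_map_univ_eq
    (fun l i => ((fwl H l).1 i j, (fwl H l).1 i k')) (fun l i => ((fwl G l).1 i j, (fwl G l).1 i k))
    (fun _ p => (p.1.1, p.2.1)) (fun _ _ => rfl) (fun _ _ => rfl)
    fun l => (Prod.mk.inj (congrFun h (l + 1))).2.symm
  exact ⟨τ, fun i => ⟨funext fun l => congrArg Prod.fst (hτ l i),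
    A_eq_of_fwl_zero_eq (congrArg Prod.snd (hτ 0 i))⟩⟩

theorem FWLEquivW.exists_rowPerm (h : FWLEquivW G H) (j : Fin n) :
    ∃ τ : Equiv.Perm (Fin m), ∀ i, rowColor H j (τ i) = rowColor G j i := by
  obtain ⟨τ, hτ⟩ := exists_perm_forall_of_map_univ_eq (fun l i => (fwl H l).1 i j)
    (fun l i => (fwl G l).1 i j) (fun _ p => p.1) (fun _ _ => rfl) (fun _ _ => rfl)
    fun l => (h l j).1.symm
  exact ⟨τ, fun i => funext fun l => hτ l i⟩

theorem FWLEquivW.exists_colPerm (h : FWLEquivW G H) (j : Fin n) :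
    ∃ σ : Equiv.Perm (Fin n), ∀ k, colColor H j (σ k) = colColor G j k := by
  obtain ⟨σ, hσ⟩ := exists_perm_forall_of_map_univ_eq (fun l k => (fwl H l).2 k j)
    (fun l k => (fwl G l).2 k j) (fun _ p => p.1) (fun _ _ => rfl) (fun _ _ => rfl)
    fun l => (h l j).2.symm
  exact ⟨σ, fun k => funext fun l => hσ l k⟩

/-- The permutation matching the column colors fixes `j`, the only column `k` with `δ_{kj} = 1`. -/
theorem FWLEquivW.colColor_anchor_eq (h : FWLEquivW G H) (j : Fin n) :
    colColor G j j = colColor H j j := by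
  obtain ⟨σ, hσ⟩ := h.exists_colPerm j
  have hσj : σ j = j := (eq_anchor_iff_of_colColor_eq (hσ j)).2 rfl
  rw [← hσ j, hσj]

theorem sum_A_eq_of_rowColor_eq {i i' : Fin m} (h : rowColor G j i = rowColor G j i')
    (b : (l : ℕ) → WWColor l) :
    ∑ k with colColor G j k = b, MILP.A G i k = ∑ k with colColor G j k = b, MILP.A G i' k := by
  obtain ⟨σ, hσ⟩ := exists_colPerm_of_rowColor_eq h
  exact sum_equiv σ (fun k => by simp [(hσ k).1]) fun k _ => (hσ k).2.symm

theorem sum_A_eq_of_colColor_eq {k k' : Fin n} (h : colColor G j k = colColor G j k')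
    (a : (l : ℕ) → VWColor l) :
    ∑ i with rowColor G j i = a, MILP.A G i k = ∑ i with rowColor G j i = a, MILP.A G i k' := by
  obtain ⟨τ, hτ⟩ := exists_rowPerm_of_colColor_eq h
  exact sum_equiv τ (fun i => by simp [(hτ i).1]) fun i _ => (hτ i).2.symm

theorem sum_A_mul_classMean_colColor (G : MILP m n) (j : Fin n) (x : Fin n → ℝ) (i : Fin m) :
    ∑ k, MILP.A G i k * classMean (colColor G j) x (colColor G j k) =
      classMean (rowColor G j) (fun i' => ∑ k, MILP.A G i' k * x k) (rowColor G j i) :=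
  sum_mul_classMean_of_equitable _ _ _ (fun _ _ b h => sum_A_eq_of_rowColor_eq h b)
    (fun _ _ a h => sum_A_eq_of_colColor_eq h a) x i

end AnchoredColors

section Transfer

variable {m n : ℕ} {G H : MILP m n} {j : Fin n}

def transfer (G H : MILP m n) (j : Fin n) (x : Fin n → ℝ) : Fin n → ℝ :=
  fun k => classMean (colColor G j) x (colColor H j k)

theorem transfer_apply_of_colColor_eq {k k' : Fin n} (hk : colColor H j k' = colColor G j k)
    (x : Fin n → ℝ) : transfer G H j x k' = classMean (colColor G j) x (colColor G j k) := by
  rw [transfer, hk]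

theorem transfer_apply_anchor (h : FWLEquivW G H) (x : Fin n → ℝ) : transfer G H j x j = x j := by
  have hcls : ({k | colColor G j k = colColor H j j} : Finset (Fin n)) = {j} := by
    ext k
    simp only [mem_filter, mem_univ, true_and, mem_singleton]
    refine ⟨fun hk => (eq_anchor_iff_of_colColor_eq hk).2 rfl, ?_⟩
    rintro rfl
    exact h.colColor_anchor_eq _
  simp [transfer, classMean, hcls]

theorem sum_c_mul_transfer (h : FWLEquivW G H) (x : Fin n → ℝ) :
    ∑ k, MILP.c H k * transfer G H j x k = ∑ k, MILP.c G k * x k := by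
  obtain ⟨σ, hσ⟩ := h.exists_colPerm j
  rw [← Equiv.sum_comp σ]
  simp_rw [transfer_apply_of_colColor_eq (hσ _), ← (features_eq_of_colColor_eq (hσ _).symm).1]
  exact sum_mul_classMean_of_const _
    (fun k k' hkk' => (features_eq_of_colColor_eq hkk').1) x

theorem euclNorm_transfer_le (h : FWLEquivW G H) (x : Fin n → ℝ) :
    euclNorm (transfer G H j x) ≤ euclNorm x := by
  obtain ⟨σ, hσ⟩ := h.exists_colPerm j
  refine Real.sqrt_le_sqrt ?_
  rw [← Equiv.sum_comp σ]
  simp_rw [transfer_apply_of_colColor_eq (hσ _)]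
  exact sum_classMean_sq_le _ x

/-- Row `τ i` of `H` matches row `i` of `G`, and its value at the transferred point is the mean of
the values `(Ax)_{i''}` over the class of `i`, all of which satisfy the constraint of row `i`. -/
theorem consSat_transfer (h : FWLEquivW G H) {x : Fin n → ℝ} (hx : consSat G x) :
    consSat H (transfer G H j x) := by
  intro i'
  obtain ⟨τ, hτ⟩ := h.exists_rowPerm j
  obtain ⟨i, rfl⟩ := τ.surjective i'
  obtain ⟨σ, hσ⟩ := exists_colPerm_of_rowColor_eq (hτ i).symm
  obtain ⟨hb, hsense⟩ := features_eq_of_rowColor_eq (hτ i)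
  have hrow : ∑ k, MILP.A H (τ i) k * transfer G H j x k =
      classMean (rowColor G j) (fun i'' => ∑ k, MILP.A G i'' k * x k) (rowColor G j i) := by
    rw [← Equiv.sum_comp σ, ← sum_A_mul_classMean_colColor]
    simp_rw [transfer_apply_of_colColor_eq (hσ _).1, (hσ _).2]
  show senseRel _ (∑ k, MILP.A H (τ i) k * transfer G H j x k) _
  rw [hrow, hb, hsense]
  refine classMean_mem (convex_senseRel _ _) ⟨i, rfl⟩ fun i'' hi'' => ?_
  obtain ⟨hb'', hsense''⟩ := features_eq_of_rowColor_eq hi''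
  rw [← hb'', ← hsense'']
  exact hx i''

theorem transfer_mem_feasSetMod (h : FWLEquivW G H) {lo : ExtLo} {hi : ExtHi}
    {x : Fin n → ℝ} (hx : x ∈ feasSetMod G j lo hi) : transfer G H j x ∈ feasSetMod H j lo hi := by
  obtain ⟨hcons, hbounds, hlo, hhi⟩ := hx
  obtain ⟨σ, hσ⟩ := h.exists_colPerm j
  refine ⟨consSat_transfer h hcons, fun k' hk' => ⟨?_, ?_⟩, ?_, ?_⟩
  · refine classMean_mem (convex_loSat _) ⟨σ.symm k', by rw [← hσ, σ.apply_symm_apply]⟩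
      fun k hk => ?_
    have hfeat := features_eq_of_colColor_eq hk
    exact hfeat.2.1 ▸ (hbounds k (mt (eq_anchor_iff_of_colColor_eq hk).1 hk')).1
  · refine classMean_mem (convex_hiSat _) ⟨σ.symm k', by rw [← hσ, σ.apply_symm_apply]⟩
      fun k hk => ?_
    have hfeat := features_eq_of_colColor_eq hk
    exact hfeat.2.2.1 ▸ (hbounds k (mt (eq_anchor_iff_of_colColor_eq hk).1 hk')).2
  · rwa [transfer_apply_anchor h]
  · rwa [transfer_apply_anchor h]

end Transfer

section Values

variable {m n : ℕ} {G H : MILP m n}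

theorem lpVal_le_of_forall_exists {c c' : Fin n → ℝ} {S S' : Set (Fin n → ℝ)}
    (hS : ∀ x ∈ S, ∃ x' ∈ S', ∑ k, c' k * x' k = ∑ k, c k * x k) : lpVal c' S' ≤ lpVal c S :=
  le_iInf₂ fun x hx => by
    obtain ⟨x', hx', hval⟩ := hS x hx
    exact hval ▸ iInf₂_le x' hx'

theorem lpValMod_eq (h : FWLEquivW G H) (j : Fin n) (lo : ExtLo) (hi : ExtHi) :
    lpValMod G j lo hi = lpValMod H j lo hi :=
  le_antisymm
    (lpVal_le_of_forall_exists fun x hx =>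
      ⟨transfer H G j x, transfer_mem_feasSetMod h.symm hx, sum_c_mul_transfer h.symm x⟩)
    (lpVal_le_of_forall_exists fun x hx =>
      ⟨transfer G H j x, transfer_mem_feasSetMod h hx, sum_c_mul_transfer h x⟩)

theorem feasSetMod_lo_hi (G : MILP m n) (j : Fin n) :
    feasSetMod G j (MILP.lo G j) (MILP.hi G j) = lpFeasSet G := by
  ext x
  constructor
  · rintro ⟨hcons, hbounds, hlo, hhi⟩
    refine ⟨hcons, fun k => ?_⟩
    rcases eq_or_ne k j with rfl | hk
    exacts [⟨hlo, hhi⟩, hbounds k hk]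
  · rintro ⟨hcons, hbounds⟩
    exact ⟨hcons, fun k _ => hbounds k, hbounds j⟩

theorem fstar_eq (h : FWLEquivW G H) (j : Fin n) : fstar G = fstar H := by
  obtain ⟨-, hlo, hhi, -⟩ := features_eq_of_colColor_eq (h.colColor_anchor_eq j)
  have hval := lpValMod_eq h j (MILP.lo G j) (MILP.hi G j)
  rwa [lpValMod, lpValMod, feasSetMod_lo_hi, hlo, hhi, feasSetMod_lo_hi] at hval

theorem IsOptSol.transfer (h : FWLEquivW G H) {j : Fin n} {x : Fin n → ℝ} (hx : IsOptSol G x) :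
    IsOptSol H (transfer G H j x) := by
  obtain ⟨-, hlo, hhi, -⟩ := features_eq_of_colColor_eq (h.colColor_anchor_eq j)
  have hfeas := transfer_mem_feasSetMod (j := j) h (lo := MILP.lo G j) (hi := MILP.hi G j)
    (by rw [feasSetMod_lo_hi]; exact hx.1)
  rw [hlo, hhi, feasSetMod_lo_hi] at hfeas
  exact ⟨hfeas, by rw [sum_c_mul_transfer h, hx.2, fstar_eq h j]⟩

/-- Transferring `x*(G)` to `H` yields an optimal solution of norm at most `‖x*(G)‖ ≤ ‖x*(H)‖`
(transfer `x*(H)` back), so it is the minimum-norm optimum of `H`; transfer fixes coordinate `j`. -/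
theorem xstar_apply_eq (h : FWLEquivW G H) (hG : ∃ x, IsMinNormOpt G x)
    (hH : ∃ x, IsMinNormOpt H x) (j : Fin n) : xstar G j = xstar H j := by
  obtain ⟨xG, hxG⟩ := hG
  obtain ⟨xH, hxH⟩ := hH
  have hmin : IsMinNormOpt H (transfer G H j xG) := ⟨hxG.1.transfer h, fun z hz =>
    calc euclNorm (transfer G H j xG) ≤ euclNorm xG := euclNorm_transfer_le h xG
      _ ≤ euclNorm (transfer H G j xH) := hxG.2 _ (hxH.1.transfer h.symm)
      _ ≤ euclNorm xH := euclNorm_transfer_le h.symm xH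
      _ ≤ euclNorm z := hxH.2 z hz⟩
  rw [xstar_eq hxG, xstar_eq hmin, transfer_apply_anchor h]

end Values

/-- Two MILP instances with real-valued SB scores that satisfy
`G ∼₂^W Ḡ` have equal SB scores. -/
theorem SB_eq_of_fwlEquivW
    {m n : ℕ} (G H : MILP m n)
    (hSBG : SBRealValued G) (hSBH : SBRealValued H)
    (h : FWLEquivW G H) :
    SB G = SB H := by
  funext j
  obtain ⟨-, hlo, hhi, hint⟩ := features_eq_of_colColor_eq (h.colColor_anchor_eq j)
  simp only [SB, branchDown, branchUp, xstar_apply_eq h hSBG.1 hSBH.1 j, hlo, hhi, hint,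
    lpValMod_eq h j, fstar_eq h j]
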